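/- Let V be finite with distinct positions h and distinct capacities c, and let u* be the node of maximum capacity. Then for every node u with h(u) < h(u*), iterating succ⁺₁ from u reaches u* in at most |S⁺(u)| steps; symmetrically every node right of u* reaches u* by iterating pred⁺₁. Hence any two nodes are connected in the CONE graph by a path of length at most |S⁺(u)| + |P⁺(v)| + 2 through u*. -/

import Mathlib

/-- `IsSucc h c u v` means `v = succ⁺₁(u)`. -/
def IsSucc {V : Type*} (h c : V → ℝ) (u v : V) : Prop :=
  h u < h v ∧ c u < c v ∧ ∀ w, h u < h w → c u < c w → h v ≤ h w

/-- `IsPred h c v u` means `u = pred⁺₁(v)`. -/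
def IsPred {V : Type*} (h c : V → ℝ) (v u : V) : Prop :=
  h u < h v ∧ c v < c u ∧ ∀ w, h w < h v → c v < c w → h w ≤ h u

/-- The (undirected) CONE graph: `u ~ v` iff `v ∈ S⁺(u) ∪ P⁺(u) ∪ S⁻(u) ∪ P⁻(u)`. -/
def coneGraph {V : Type*} (h c : V → ℝ) : SimpleGraph V where
  Adj u v := u ≠ v ∧ (Relation.TransGen (IsSucc h c) u v ∨
    Relation.TransGen (IsSucc h c) v u ∨
    Relation.TransGen (IsPred h c) u v ∨
    Relation.TransGen (IsPred h c) v u)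
  symm := by
    constructor
    rintro a b ⟨hne, hr⟩
    exact ⟨hne.symm, by tauto⟩
  loopless := by
    constructor
    rintro a ⟨hne, -⟩
    exact hne rfl

/-!
Among the finitely many nodes right of `u` with larger capacity (a set containing `u*`), the
leftmost one is `succ⁺₁(u)`; it lies strictly right of `u` and not right of `u*`, so induction
on the position, from the right, walks the `succ⁺₁` chain into `u*`. Mirroring positions turns
`pred⁺₁` into `succ⁺₁`. Two nodes on opposite sides of `u*` are then both CONE-adjacent to `u*`,
so their distance is at most 2.
-/

section Chains

variable {V : Type*} {h c : V → ℝ}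

theorem isPred_eq_isSucc_neg : IsPred h c = IsSucc (-h) c := by
  ext v u
  simp only [IsPred, IsSucc, Pi.neg_apply, neg_lt_neg_iff, neg_le_neg_iff]

theorem transGen_isSucc_lt {u v : V} (huv : Relation.TransGen (IsSucc h c) u v) : h u < h v :=
  Relation.TransGen.trans_induction_on huv (fun huv => huv.1) fun _ _ => lt_trans

theorem transGen_isPred_lt {u v : V} (hvu : Relation.TransGen (IsPred h c) v u) : h u < h v := by
  rw [isPred_eq_isSucc_neg] at hvu
  simpa using transGen_isSucc_lt hvu

theorem exists_isSucc_le [Finite V] {u t : V} (hht : h u < h t) (hct : c u < c t) :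
    ∃ v, IsSucc h c u v ∧ h v ≤ h t := by
  obtain ⟨v, ⟨hhv, hcv⟩, hmin⟩ :=
    Set.exists_min_image {w | h u < h w ∧ c u < c w} h (Set.toFinite _) ⟨t, hht, hct⟩
  exact ⟨v, ⟨hhv, hcv, fun w hhw hcw => hmin w ⟨hhw, hcw⟩⟩, hmin t ⟨hht, hct⟩⟩

theorem transGen_isSucc_of_lt_argmax [Finite V] (hinj : Function.Injective h) {ustar : V}
    (hmax : ∀ v, v ≠ ustar → c v < c ustar) {u : V} (hu : h u < h ustar) :
    Relation.TransGen (IsSucc h c) u ustar := by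
  induction u using (Finite.wellFounded_of_trans_of_irrefl fun a b : V => h b < h a).induction
    with
  | _ u ih =>
    obtain ⟨v, huv, hv⟩ := exists_isSucc_le hu (hmax u (ne_of_apply_ne h hu.ne))
    rcases hv.lt_or_eq with hv | hv
    · exact .head huv (ih v huv.1 hv)
    · exact hinj hv ▸ .single huv

theorem transGen_isPred_of_lt_argmax [Finite V] (hinj : Function.Injective h) {ustar : V}
    (hmax : ∀ v, v ≠ ustar → c v < c ustar) {v : V} (hv : h ustar < h v) :
    Relation.TransGen (IsPred h c) v ustar := by
  rw [isPred_eq_isSucc_neg]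
  exact transGen_isSucc_of_lt_argmax (neg_injective.comp hinj) hmax (neg_lt_neg hv)

theorem coneGraph_adj_of_transGen_isSucc {u v : V} (huv : Relation.TransGen (IsSucc h c) u v) :
    (coneGraph h c).Adj u v :=
  ⟨ne_of_apply_ne h (transGen_isSucc_lt huv).ne, .inl huv⟩

theorem coneGraph_adj_of_transGen_isPred {u v : V} (hvu : Relation.TransGen (IsPred h c) v u) :
    (coneGraph h c).Adj u v :=
  ⟨ne_of_apply_ne h (transGen_isPred_lt hvu).ne, .inr (.inr (.inr hvu))⟩

end Chains

theorem chains_reach_max_general {V : Type*} [Fintype V]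
    (h c : V → ℝ) (hinj : Function.Injective h)
    (ustar : V) (hmax : ∀ v : V, v ≠ ustar → c v < c ustar) :
    (∀ u : V, h u < h ustar → Relation.TransGen (IsSucc h c) u ustar) ∧
    (∀ v : V, h ustar < h v → Relation.TransGen (IsPred h c) v ustar) ∧
    (∀ u v : V, h u < h ustar → h ustar < h v →
      (coneGraph h c).Reachable u v ∧
      (coneGraph h c).dist u v ≤
        {t | Relation.TransGen (IsSucc h c) u t}.ncard +
          {t | Relation.TransGen (IsPred h c) v t}.ncard + 2) := by
  have succ_chain := fun u (hu : h u < h ustar) => transGen_isSucc_of_lt_argmax hinj hmax hu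
  have pred_chain := fun v (hv : h ustar < h v) => transGen_isPred_of_lt_argmax hinj hmax hv
  refine ⟨succ_chain, pred_chain, fun u v hu hv => ?_⟩
  let path : (coneGraph h c).Walk u v :=
    .cons (coneGraph_adj_of_transGen_isSucc (succ_chain u hu))
      (.cons (coneGraph_adj_of_transGen_isPred (pred_chain v hv)) .nil)
  have hdist : (coneGraph h c).dist u v ≤ 2 := SimpleGraph.dist_le path
  exact ⟨path.reachable, by omega⟩

/-- Every node left of the maximum-capacity node `u*` reaches `u*` by
iterating `succ⁺₁` (i.e. `u* ∈ S⁺(u)`); symmetrically every node right of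
`u*` reaches `u*` by iterating `pred⁺₁`; hence two nodes on opposite sides of
`u*` are connected in the CONE graph by a path of length at most
`|S⁺(u)| + |P⁺(v)| + 2` through `u*`. -/
theorem chains_reach_max {V : Type*} [Fintype V]
    (h c : V → ℝ) (hinj : Function.Injective h) (cinj : Function.Injective c)
    (ustar : V) (hmax : ∀ v : V, v ≠ ustar → c v < c ustar) :
    (∀ u : V, h u < h ustar → Relation.TransGen (IsSucc h c) u ustar) ∧
    (∀ v : V, h ustar < h v → Relation.TransGen (IsPred h c) v ustar) ∧
    (∀ u v : V, h u < h ustar → h ustar < h v →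
      (coneGraph h c).Reachable u v ∧
      (coneGraph h c).dist u v ≤
        {t | Relation.TransGen (IsSucc h c) u t}.ncard +
          {t | Relation.TransGen (IsPred h c) v t}.ncard + 2) :=
  chains_reach_max_general h c hinj ustar hmax
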